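/- arXiv:1803.02339 — 2 statements merged into one kernel-verified Lean document; each statement's English description precedes it below -/
import Mathlib

section
/- There exists a strongly causal spacetime (M,g) (an open subset of 3-dimensional Minkowski space) which is future causally simple, together with a conformal completion M̃ = M ∪ ℐ⁺ with null boundary ℐ⁺, and a compact set K ⊂ M, such that J⁺(K, M̃) is not closed in M̃. Concretely: let p = (-1,-1,0) in ℝ^{1,2}, M = ℝ^{1,2} \ (J⁺(p) ∩ {t ≥ 1}), ℐ⁺ = {t > 1} ∩ ∂J⁺(p, ℝ^{1,2}), and K = {t=0, x=0, y ∈ [-1,0]}; then the null generator {t > 1, x = t, y = 0} of ℐ⁺ lies in the closure of J⁺(K, M̃) but not in J⁺(K, M̃). -/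
open Set

/-- A point `(t, x, y)` of 3-dimensional Minkowski space `ℝ^{1,2}`. -/
abbrev Mink3 := ℝ × ℝ × ℝ

/-- The causal order of `ℝ^{1,2}` (metric `-dt² + dx² + dy²`):
`p ≤ q` iff `q - p` is future causal. -/
noncomputable def mkCausal (p q : Mink3) : Prop :=
  Real.sqrt ((q.2.1 - p.2.1) ^ 2 + (q.2.2 - p.2.2) ^ 2) ≤ q.1 - p.1

/-- A future directed causal curve from `p` to `q` staying in `A ⊆ ℝ^{1,2}`. -/
def CausalCurveIn (A : Set Mink3) (γ : ℝ → Mink3) (p q : Mink3) : Prop :=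
  ContinuousOn γ (Icc 0 1) ∧ γ 0 = p ∧ γ 1 = q ∧
    (∀ s ∈ Icc (0:ℝ) 1, γ s ∈ A) ∧
    ∀ s ∈ Icc (0:ℝ) 1, ∀ s' ∈ Icc (0:ℝ) 1, s ≤ s' → mkCausal (γ s) (γ s')

/-- Causal future `J⁺(K, A)` of `K` within `A ⊆ ℝ^{1,2}`. -/
def Jplus (A K : Set Mink3) : Set Mink3 :=
  {q | ∃ p ∈ K, ∃ γ, CausalCurveIn A γ p q}

/-- `A` is strongly causal: every point has arbitrarily small neighborhoods
which no causal curve in `A` leaves and re-enters. -/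
def StronglyCausal (A : Set Mink3) : Prop :=
  ∀ p ∈ A, ∀ U : Set Mink3, IsOpen U → p ∈ U →
    ∃ V : Set Mink3, IsOpen V ∧ p ∈ V ∧ V ⊆ U ∧
      ∀ γ p' q', CausalCurveIn A γ p' q' → p' ∈ V → q' ∈ V →
        ∀ s ∈ Icc (0:ℝ) 1, γ s ∈ U

/-- `A` is future causally simple: `J⁺(K, A)` is closed in `A` for every
compact `K ⊆ A`. -/
def FutureCausallySimple (A : Set Mink3) : Prop :=
  ∀ K ⊆ A, IsCompact K → ∀ q ∈ A, q ∈ closure (Jplus A K) → q ∈ Jplus A K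

lemma sqrt_tri (a b c d : ℝ) :
    Real.sqrt ((a + c) ^ 2 + (b + d) ^ 2) ≤
      Real.sqrt (a ^ 2 + b ^ 2) + Real.sqrt (c ^ 2 + d ^ 2) := by
  have h1 : a * c + b * d ≤ Real.sqrt (a ^ 2 + b ^ 2) * Real.sqrt (c ^ 2 + d ^ 2) := by
    rw [← Real.sqrt_mul (by positivity)]
    calc a * c + b * d ≤ |a * c + b * d| := le_abs_self _
      _ = Real.sqrt ((a * c + b * d) ^ 2) := (Real.sqrt_sq_eq_abs _).symm
      _ ≤ Real.sqrt ((a ^ 2 + b ^ 2) * (c ^ 2 + d ^ 2)) :=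
          Real.sqrt_le_sqrt (by nlinarith [sq_nonneg (a * d - b * c)])
  have h2 : (a + c) ^ 2 + (b + d) ^ 2 ≤
      (Real.sqrt (a ^ 2 + b ^ 2) + Real.sqrt (c ^ 2 + d ^ 2)) ^ 2 := by
    have e1 := Real.sq_sqrt (show (0:ℝ) ≤ a ^ 2 + b ^ 2 by positivity)
    have e2 := Real.sq_sqrt (show (0:ℝ) ≤ c ^ 2 + d ^ 2 by positivity)
    nlinarith [h1]
  calc Real.sqrt ((a + c) ^ 2 + (b + d) ^ 2)
      ≤ Real.sqrt ((Real.sqrt (a ^ 2 + b ^ 2) + Real.sqrt (c ^ 2 + d ^ 2)) ^ 2) :=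
        Real.sqrt_le_sqrt h2
    _ = _ := Real.sqrt_sq (by positivity)

lemma mk_trans {a b c : Mink3} (h1 : mkCausal a b) (h2 : mkCausal b c) : mkCausal a c := by
  unfold mkCausal at *
  have key := sqrt_tri (b.2.1 - a.2.1) (b.2.2 - a.2.2) (c.2.1 - b.2.1) (c.2.2 - b.2.2)
  rw [show b.2.1 - a.2.1 + (c.2.1 - b.2.1) = c.2.1 - a.2.1 by ring,
      show b.2.2 - a.2.2 + (c.2.2 - b.2.2) = c.2.2 - a.2.2 by ring] at key
  linarith

lemma mk_dt {a b : Mink3} (h : mkCausal a b) : a.1 ≤ b.1 := by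
  unfold mkCausal at h
  have := Real.sqrt_nonneg ((b.2.1 - a.2.1) ^ 2 + (b.2.2 - a.2.2) ^ 2)
  linarith

lemma mk_dx {a b : Mink3} (h : mkCausal a b) : |b.2.1 - a.2.1| ≤ b.1 - a.1 := by
  unfold mkCausal at h
  calc |b.2.1 - a.2.1| = Real.sqrt ((b.2.1 - a.2.1) ^ 2) := (Real.sqrt_sq_eq_abs _).symm
    _ ≤ Real.sqrt ((b.2.1 - a.2.1) ^ 2 + (b.2.2 - a.2.2) ^ 2) :=
        Real.sqrt_le_sqrt (by nlinarith [sq_nonneg (b.2.2 - a.2.2)])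
    _ ≤ b.1 - a.1 := h

lemma mk_dy {a b : Mink3} (h : mkCausal a b) : |b.2.2 - a.2.2| ≤ b.1 - a.1 := by
  unfold mkCausal at h
  calc |b.2.2 - a.2.2| = Real.sqrt ((b.2.2 - a.2.2) ^ 2) := (Real.sqrt_sq_eq_abs _).symm
    _ ≤ Real.sqrt ((b.2.1 - a.2.1) ^ 2 + (b.2.2 - a.2.2) ^ 2) :=
        Real.sqrt_le_sqrt (by nlinarith [sq_nonneg (b.2.1 - a.2.1)])
    _ ≤ b.1 - a.1 := h

def segC (p q : Mink3) : ℝ → Mink3 := fun s =>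
  (p.1 + s * (q.1 - p.1), p.2.1 + s * (q.2.1 - p.2.1), p.2.2 + s * (q.2.2 - p.2.2))

lemma segC_cont (p q : Mink3) : Continuous (segC p q) := by
  unfold segC; fun_prop

lemma segC_zero (p q : Mink3) : segC p q 0 = p := by
  simp [segC]

lemma segC_one (p q : Mink3) : segC p q 1 = q := by
  simp [segC]

lemma segC_causal {p q : Mink3} (h : mkCausal p q) {s s' : ℝ} (hss : s ≤ s') :
    mkCausal (segC p q s) (segC p q s') := by
  unfold mkCausal segC at *
  simp only
  rw [show p.2.1 + s' * (q.2.1 - p.2.1) - (p.2.1 + s * (q.2.1 - p.2.1)) =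
        (s' - s) * (q.2.1 - p.2.1) by ring,
      show p.2.2 + s' * (q.2.2 - p.2.2) - (p.2.2 + s * (q.2.2 - p.2.2)) =
        (s' - s) * (q.2.2 - p.2.2) by ring,
      show ((s' - s) * (q.2.1 - p.2.1)) ^ 2 + ((s' - s) * (q.2.2 - p.2.2)) ^ 2 =
        (s' - s) ^ 2 * ((q.2.1 - p.2.1) ^ 2 + (q.2.2 - p.2.2) ^ 2) by ring,
      Real.sqrt_mul (sq_nonneg _), Real.sqrt_sq_eq_abs,
      abs_of_nonneg (by linarith : (0:ℝ) ≤ s' - s)]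
  calc (s' - s) * Real.sqrt ((q.2.1 - p.2.1) ^ 2 + (q.2.2 - p.2.2) ^ 2)
      ≤ (s' - s) * (q.1 - p.1) := by
        apply mul_le_mul_of_nonneg_left h (by linarith)
    _ = p.1 + s' * (q.1 - p.1) - (p.1 + s * (q.1 - p.1)) := by ring

def P0 : Mink3 := (-1, -1, 0)

def Mset : Set Mink3 := univ \ {q | mkCausal P0 q ∧ 1 ≤ q.1}

lemma segC_mem {p q : Mink3} (h : mkCausal p q) (hq : q ∈ Mset) {s : ℝ}
    (hs : s ∈ Icc (0:ℝ) 1) : segC p q s ∈ Mset := by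
  have hsq : mkCausal (segC p q s) q := by
    have := segC_causal h hs.2
    rwa [segC_one] at this
  refine ⟨mem_univ _, ?_⟩
  rintro ⟨hc, ht⟩
  refine hq.2 ⟨mk_trans hc hsq, ?_⟩
  have := mk_dt hsq
  linarith

lemma reach {p q : Mink3} (h : mkCausal p q) (hq : q ∈ Mset) :
    ∃ γ, CausalCurveIn Mset γ p q :=
  ⟨segC p q, (segC_cont p q).continuousOn, segC_zero p q, segC_one p q,
    fun _ hs => segC_mem h hq hs, fun _ _ _ _ hss => segC_causal h hss⟩

lemma Jplus_sub (A K : Set Mink3) :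
    Jplus A K ⊆ {r | ∃ p ∈ K, mkCausal p r} := by
  rintro r ⟨p, hpK, γ, _, h0, h1, _, hc⟩
  refine ⟨p, hpK, ?_⟩
  have := hc 0 ⟨le_refl 0, zero_le_one⟩ 1 ⟨zero_le_one, le_refl 1⟩ zero_le_one
  rwa [h0, h1] at this

lemma cone_closed (K : Set Mink3) (hK : IsCompact K) :
    IsClosed {r | ∃ p ∈ K, mkCausal p r} := by
  have hF : Continuous (fun ab : Mink3 × Mink3 =>
      Real.sqrt ((ab.2.2.1 - ab.1.2.1) ^ 2 + (ab.2.2.2 - ab.1.2.2) ^ 2)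
        - (ab.2.1 - ab.1.1)) := by
    apply Continuous.sub
    · exact Real.continuous_sqrt.comp (by fun_prop)
    · fun_prop
  apply IsSeqClosed.isClosed
  intro x q hx hlim
  choose pf hpf hcf using hx
  obtain ⟨pl, hpl, φ, hφ, hconv⟩ := hK.tendsto_subseq hpf
  refine ⟨pl, hpl, ?_⟩
  have hx2 : Filter.Tendsto (fun n => x (φ n)) Filter.atTop (nhds q) :=
    hlim.comp hφ.tendsto_atTop
  have hpair : Filter.Tendsto (fun n => (pf (φ n), x (φ n))) Filter.atTop
      (nhds (pl, q)) := hconv.prodMk_nhds hx2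
  have hg := (hF.tendsto (pl, q)).comp hpair
  simp only [Function.comp] at hg
  have hle : Real.sqrt ((q.2.1 - pl.2.1) ^ 2 + (q.2.2 - pl.2.2) ^ 2)
      - (q.1 - pl.1) ≤ 0 := by
    apply le_of_tendsto hg
    filter_upwards with n
    exact sub_nonpos.mpr (hcf (φ n))
  unfold mkCausal
  linarith

lemma dist3 (a b : Mink3) :
    dist a b = max |a.1 - b.1| (max |a.2.1 - b.2.1| |a.2.2 - b.2.2|) := by
  rw [Prod.dist_eq, Prod.dist_eq, Real.dist_eq, Real.dist_eq, Real.dist_eq]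

lemma Mset_open : IsOpen Mset := by
  have hC : IsClosed {q : Mink3 | mkCausal P0 q ∧ 1 ≤ q.1} := by
    rw [setOf_and]
    apply IsClosed.inter
    · have e : {q : Mink3 | mkCausal P0 q} =
          {q : Mink3 | Real.sqrt ((q.2.1 - P0.2.1) ^ 2 + (q.2.2 - P0.2.2) ^ 2) ≤ q.1 - P0.1} :=
        rfl
      rw [e]
      exact isClosed_le (Real.continuous_sqrt.comp (by fun_prop)) (by fun_prop)
    · exact isClosed_le continuous_const continuous_fst
  have e2 : Mset = {q : Mink3 | mkCausal P0 q ∧ 1 ≤ q.1}ᶜ := by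
    unfold Mset
    exact (compl_eq_univ_diff _).symm
  rw [e2]
  exact hC.isOpen_compl

lemma Mset_sc : StronglyCausal Mset := by
  intro p hp U hU hpU
  obtain ⟨ε, hε, hball⟩ := Metric.isOpen_iff.mp hU p hpU
  refine ⟨Metric.ball p (ε/4), Metric.isOpen_ball, Metric.mem_ball_self (by linarith),
    (Metric.ball_subset_ball (by linarith)).trans hball, ?_⟩
  rintro γ p' q' ⟨hcont, h0, h1, hmem, hc⟩ hp' hq' s hs
  have c1 : mkCausal p' (γ s) := by
    have := hc 0 ⟨le_refl 0, zero_le_one⟩ s hs hs.1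
    rwa [h0] at this
  have c2 : mkCausal (γ s) q' := by
    have := hc s hs 1 ⟨zero_le_one, le_refl 1⟩ hs.2
    rwa [h1] at this
  have dp' : dist p' p < ε/4 := Metric.mem_ball.mp hp'
  have dq' : dist q' p < ε/4 := Metric.mem_ball.mp hq'
  rw [dist3] at dp' dq'
  have dp1 := (max_lt_iff.mp dp').1
  have dp2 := (max_lt_iff.mp (max_lt_iff.mp dp').2).1
  have dp3 := (max_lt_iff.mp (max_lt_iff.mp dp').2).2
  have dq1 := (max_lt_iff.mp dq').1
  have t1 := mk_dt c1
  have t2 := mk_dt c2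
  have x1 := mk_dx c1
  have y1 := mk_dy c1
  rw [abs_lt] at dp1 dq1 dp2 dp3
  rw [abs_le] at x1 y1
  apply hball
  rw [Metric.mem_ball, dist3]
  apply max_lt
  · rw [abs_lt]; constructor <;> linarith
  · apply max_lt <;> (rw [abs_lt]; constructor <;> linarith)


lemma Mset_cs : FutureCausallySimple Mset := by
  intro K' _ hK' q hqM hqcl
  have hq2 : q ∈ {r | ∃ p ∈ K', mkCausal p r} := by
    have h2 := closure_mono (Jplus_sub Mset K') hqcl
    rwa [(cone_closed K' hK').closure_eq] at h2
  obtain ⟨p, hpK, hpq⟩ := hq2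
  obtain ⟨γ, hγ⟩ := reach hpq hqM
  exact ⟨p, hpK, γ, hγ⟩

/-- There is a strongly causal, future causally simple open subset
`M` of `ℝ^{1,2}` with a conformal completion `M̃ = M ∪ ℐ⁺` having null
boundary `ℐ⁺`, and a compact `K ⊆ M`, such that `J⁺(K, M̃)` is not closed in
`M̃`.  Concretely, with `p₀ = (-1,-1,0)`, `M = ℝ^{1,2} \ (J⁺(p₀) ∩ {t ≥ 1})`,
`ℐ⁺ = {t > 1} ∩ ∂J⁺(p₀)` and `K = {t = 0, x = 0, y ∈ [-1,0]}`, every point of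
the null generator `{t > 1, x = t, y = 0}` of `ℐ⁺` lies in the closure of
`J⁺(K, M̃)` but not in `J⁺(K, M̃)`. -/
theorem causally_simple_but_completion_not :
    let p₀ : Mink3 := (-1, -1, 0)
    let M : Set Mink3 := univ \ {q | mkCausal p₀ q ∧ 1 ≤ q.1}
    let scri : Set Mink3 :=
      {q | 1 < q.1 ∧ (q.2.1 + 1) ^ 2 + q.2.2 ^ 2 = (q.1 + 1) ^ 2}
    let Mtilde : Set Mink3 := M ∪ scri
    let K : Set Mink3 := {q | q.1 = 0 ∧ q.2.1 = 0 ∧ q.2.2 ∈ Icc (-1:ℝ) 0}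
    IsOpen M ∧ StronglyCausal M ∧ FutureCausallySimple M ∧
      K ⊆ M ∧ IsCompact K ∧ scri ⊆ Mtilde ∧
      (∀ z : Mink3, 1 < z.1 → z.2.1 = z.1 → z.2.2 = 0 →
        z ∈ scri ∧ z ∈ closure (Jplus Mtilde K) ∧ z ∉ Jplus Mtilde K) ∧
      ¬ (∀ q ∈ Mtilde, q ∈ closure (Jplus Mtilde K) → q ∈ Jplus Mtilde K) := by
  intro p₀ M scri Mtilde K
  have hgen : ∀ z : Mink3, 1 < z.1 → z.2.1 = z.1 → z.2.2 = 0 →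
      z ∈ scri ∧ z ∈ closure (Jplus Mtilde K) ∧ z ∉ Jplus Mtilde K := by
    intro z hz1 hz2 hz3
    obtain ⟨zt, T, zy⟩ := z
    dsimp only at hz1 hz2 hz3
    subst hz2 hz3
    refine ⟨⟨hz1, by ring⟩, ?_, ?_⟩
    · -- closure
      rw [Metric.mem_closure_iff]
      intro ε hε
      have hTpos : (0:ℝ) < T + 1 := by linarith
      set δ : ℝ := min (min (ε/2) (ε^2/(4*(T+1)))) (1/(2*(T+1))) with hδdef
      have hδpos : 0 < δ :=
        lt_min (lt_min (by linarith) (by positivity)) (by positivity)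
      have hδ1 : δ ≤ ε/2 := le_trans (min_le_left _ _) (min_le_left _ _)
      have hδ2 : δ ≤ ε^2/(4*(T+1)) := le_trans (min_le_left _ _) (min_le_right _ _)
      have hδ3 : δ ≤ 1/(2*(T+1)) := min_le_right _ _
      have hδT : δ ≤ 1 := hδ3.trans (by rw [div_le_one (by linarith)]; linarith)
      set y : ℝ := Real.sqrt (2*(T+1)*δ) with hydef
      have hy0 : 0 ≤ y := Real.sqrt_nonneg _
      have hysq : y^2 = 2*(T+1)*δ := Real.sq_sqrt (by positivity)
      have hy1 : y ≤ 1 := by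
        have h3 := mul_le_mul_of_nonneg_left hδ3 (le_of_lt (show (0:ℝ) < 2*(T+1) by linarith))
        have e : 2*(T+1)*(1/(2*(T+1))) = 1 := by field_simp
        nlinarith [sq_nonneg (y - 1)]
      have hyε : y < ε := by
        have h3 := mul_le_mul_of_nonneg_left hδ2 (le_of_lt (show (0:ℝ) < 2*(T+1) by linarith))
        have e : 2*(T+1)*(ε^2/(4*(T+1))) = ε^2/2 := by field_simp; ring
        nlinarith
      have hpK : ((0:ℝ), (0:ℝ), -y) ∈ K := ⟨rfl, rfl, show (-1:ℝ) ≤ -y by linarith, show -y ≤ (0:ℝ) by linarith⟩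
      have hmk : mkCausal ((0:ℝ), (0:ℝ), -y) (T, T - δ, -y) := by
        show Real.sqrt ((T - δ - 0)^2 + (-y - -y)^2) ≤ T - 0
        rw [show (T - δ - 0)^2 + (-y - -y)^2 = (T - δ)^2 by ring,
          Real.sqrt_sq (by linarith)]
        linarith
      have hnc : ¬ mkCausal P0 (T, T - δ, -y) := by
        intro h
        have h' : Real.sqrt ((T - δ - -1)^2 + (-y - 0)^2) ≤ T - -1 := h
        have hnn : (0:ℝ) ≤ (T - δ - -1)^2 + (-y - 0)^2 := by positivity
        nlinarith [Real.sq_sqrt hnn, Real.sqrt_nonneg ((T - δ - -1)^2 + (-y - 0)^2)]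
      have hqM : (T, T - δ, -y) ∈ Mset := ⟨mem_univ _, fun hc => hnc hc.1⟩
      obtain ⟨γ, hγ⟩ := reach hmk hqM
      refine ⟨(T, T - δ, -y), ⟨((0:ℝ), (0:ℝ), -y), hpK, γ, hγ.1, hγ.2.1, hγ.2.2.1,
        fun s hs => Or.inl (hγ.2.2.2.1 s hs), hγ.2.2.2.2⟩, ?_⟩
      rw [dist3]
      dsimp only
      rw [sub_self, abs_zero, show T - (T - δ) = δ by ring, show (0:ℝ) - -y = y by ring,
        abs_of_nonneg (le_of_lt hδpos), abs_of_nonneg hy0]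
      exact max_lt hε (max_lt (by linarith) hyε)
    · -- not in Jplus
      rintro ⟨p, hpK, γ, hcont, h0, h1, hmem, hc⟩
      obtain ⟨hp1, hp2, hp3⟩ := hpK
      have hmk0 : mkCausal p (T, T, 0) := by
        have := hc 0 ⟨le_refl 0, zero_le_one⟩ 1 ⟨zero_le_one, le_refl 1⟩ zero_le_one
        rwa [h0, h1] at this
      have hy0 : p.2.2 = 0 := by
        have h' : Real.sqrt ((T - p.2.1)^2 + ((0:ℝ) - p.2.2)^2) ≤ T - p.1 := hmk0
        rw [hp1, hp2] at h'
        have hnn : (0:ℝ) ≤ (T - 0)^2 + ((0:ℝ) - p.2.2)^2 := by positivity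
        have h2 : (T - 0)^2 + ((0:ℝ) - p.2.2)^2 ≤ T^2 := by
          nlinarith [Real.sq_sqrt hnn, Real.sqrt_nonneg ((T - 0)^2 + ((0:ℝ) - p.2.2)^2),
            hz1]
        have h3 : p.2.2^2 = 0 := by nlinarith
        exact pow_eq_zero_iff two_ne_zero |>.mp h3
      have hcont1 : ContinuousOn (fun s => (γ s).1) (Icc 0 1) :=
        continuous_fst.comp_continuousOn hcont
      have hsub := intermediate_value_Icc zero_le_one hcont1
      rw [h0, h1, hp1] at hsub
      obtain ⟨s, hsI, hs1x⟩ := hsub ⟨zero_le_one, le_of_lt hz1⟩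
      have hs1 : (γ s).1 = 1 := hs1x
      have c1 : mkCausal p (γ s) := by
        have := hc 0 ⟨le_refl 0, zero_le_one⟩ s hsI hsI.1
        rwa [h0] at this
      have hxy : ((γ s).2.1)^2 + ((γ s).2.2)^2 ≤ 1 := by
        have h' : Real.sqrt (((γ s).2.1 - p.2.1)^2 + ((γ s).2.2 - p.2.2)^2)
            ≤ (γ s).1 - p.1 := c1
        rw [hp1, hp2, hy0, hs1] at h'
        have hnn : (0:ℝ) ≤ ((γ s).2.1 - 0)^2 + ((γ s).2.2 - 0)^2 := by positivity
        nlinarith [Real.sq_sqrt hnn,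
          Real.sqrt_nonneg (((γ s).2.1 - 0)^2 + ((γ s).2.2 - 0)^2)]
      have hMem : γ s ∈ M ∨ γ s ∈ scri := hmem s hsI
      rcases hMem with hM | hscri
      · apply hM.2
        constructor
        · show Real.sqrt (((γ s).2.1 - -1)^2 + ((γ s).2.2 - 0)^2) ≤ (γ s).1 - -1
          rw [hs1]
          have h4 : ((γ s).2.1 - -1)^2 + ((γ s).2.2 - 0)^2 ≤ 4 := by
            nlinarith [sq_nonneg ((γ s).2.1 - 1)]
          calc Real.sqrt (((γ s).2.1 - -1)^2 + ((γ s).2.2 - 0)^2)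
              ≤ Real.sqrt 4 := Real.sqrt_le_sqrt h4
            _ = 2 := by
                rw [show (4:ℝ) = 2^2 by norm_num, Real.sqrt_sq (by norm_num)]
            _ ≤ 1 - -1 := by norm_num
        · exact le_of_eq hs1.symm
      · obtain ⟨h5, -⟩ := hscri
        rw [hs1] at h5
        exact lt_irrefl 1 h5
  refine ⟨Mset_open, Mset_sc, Mset_cs, ?_, ?_, subset_union_right, hgen, ?_⟩
  · -- K ⊆ M
    rintro q ⟨h1, h2, h3⟩
    refine ⟨mem_univ _, ?_⟩
    rintro ⟨-, ht⟩
    rw [h1] at ht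
    linarith
  · -- IsCompact K
    have e : K = (fun y : ℝ => ((0:ℝ), (0:ℝ), y)) '' Icc (-1) 0 := by
      ext q
      constructor
      · rintro ⟨h1, h2, h3⟩
        refine ⟨q.2.2, h3, ?_⟩
        show ((0:ℝ), (0:ℝ), q.2.2) = q
        simp [Prod.ext_iff, h1, h2]
      · rintro ⟨yy, hyy, rfl⟩
        exact ⟨rfl, rfl, hyy⟩
    rw [e]
    exact isCompact_Icc.image (by fun_prop)
  · -- not closed
    intro hcl
    obtain ⟨hz_scri, hz_cl, hz_nin⟩ := hgen ((2:ℝ), (2:ℝ), (0:ℝ)) (by norm_num) rfl rfl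
    exact hz_nin (hcl _ (Or.inr hz_scri) hz_cl)
end

section
/- For the Schwarzschild–de Sitter potential f(r) = 1 - 2m/r - (Λ/3)r², with m > 0, Λ > 0 and 9Λm² < 1, the function f has exactly two positive roots r₁ < r₂, and f > 0 on (r₁, r₂) while f < 0 on (0, r₁) and on (r₂, ∞). -/
/-- For the Schwarzschild–de Sitter potential
`f(r) = 1 - 2m/r - (Λ/3)r²` with `m > 0`, `Λ > 0`, `9Λm² < 1`,
`f` has exactly two positive roots `r₁ < r₂`, with `f > 0` on `(r₁,r₂)`
and `f < 0` on `(0,r₁)` and on `(r₂,∞)`. -/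
theorem schwarzschild_deSitter_two_horizons (m Λ : ℝ) (hm : 0 < m) (hΛ : 0 < Λ)
    (hsub : 9 * Λ * m ^ 2 < 1) :
    ∃ r₁ r₂ : ℝ, 0 < r₁ ∧ r₁ < r₂ ∧
      (let f : ℝ → ℝ := fun r => 1 - 2 * m / r - (Λ / 3) * r ^ 2
      f r₁ = 0 ∧ f r₂ = 0 ∧
      (∀ r, 0 < r → f r = 0 → r = r₁ ∨ r = r₂) ∧
      (∀ r ∈ Set.Ioo r₁ r₂, 0 < f r) ∧
      (∀ r ∈ Set.Ioo (0:ℝ) r₁, f r < 0) ∧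
      (∀ r, r₂ < r → f r < 0)) := by
  set c : ℝ := Λ / 3 with hc
  have hcpos : 0 < c := by positivity
  set s : ℝ := Real.sqrt Λ with hs
  have hspos : 0 < s := Real.sqrt_pos.mpr hΛ
  have hs2 : s ^ 2 = Λ := Real.sq_sqrt hΛ.le
  set g : ℝ → ℝ := fun r => r - 2 * m - c * r ^ 3 with hg
  have hgc : Continuous g := by fun_prop
  have hms : 3 * m * s < 1 := by nlinarith [sq_nonneg (3 * m * s - 1), sq_nonneg (3 * m * s + 1)]
  have h0 : g 0 < 0 := by simp only [hg]; norm_num; linarith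
  have hstar : 0 < g (1 / s) := by
    have h1 : g (1 / s) = 2 / (3 * s) - 2 * m := by
      simp only [hg, hc]; field_simp; nlinarith [hs2]
    rw [h1, sub_pos, lt_div_iff₀ (by positivity : (0:ℝ) < 3 * s)]
    nlinarith
  have h2s : g (2 / s) < 0 := by
    have h1 : g (2 / s) = -(2 / (3 * s)) - 2 * m := by
      simp only [hg, hc]; field_simp; nlinarith [hs2]
    rw [h1]
    have : 0 < 2 / (3 * s) := by positivity
    linarith
  obtain ⟨r₁, hr₁mem, hgr₁⟩ := intermediate_value_Ioo (by positivity : (0:ℝ) ≤ 1 / s)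
    hgc.continuousOn ⟨h0, hstar⟩
  obtain ⟨r₂, hr₂mem, hgr₂⟩ := intermediate_value_Ioo'
    (by rw [div_le_div_iff_of_pos_right hspos]; norm_num : (1:ℝ) / s ≤ 2 / s)
    hgc.continuousOn ⟨h2s, hstar⟩
  obtain ⟨hr₁0, hr₁s⟩ := hr₁mem
  obtain ⟨hsr₂, hr₂2s⟩ := hr₂mem
  have hr₁₂ : r₁ < r₂ := lt_trans hr₁s hsr₂
  have hr₂0 : 0 < r₂ := lt_trans hr₁0 hr₁₂
  have hne : r₁ - r₂ ≠ 0 := sub_ne_zero.mpr (ne_of_lt hr₁₂)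
  have hgr₁' : r₁ - 2 * m - c * r₁ ^ 3 = 0 := hgr₁
  have hgr₂' : r₂ - 2 * m - c * r₂ ^ 3 = 0 := hgr₂
  have hA : c * (r₁ ^ 2 + r₁ * r₂ + r₂ ^ 2) = 1 := by
    have key : (r₁ - r₂) * (1 - c * (r₁ ^ 2 + r₁ * r₂ + r₂ ^ 2)) = 0 := by
      linear_combination hgr₁' - hgr₂'
    rcases mul_eq_zero.mp key with h | h
    · exact absurd h hne
    · linarith
  have hm2 : 2 * m = c * (r₁ * r₂ * (r₁ + r₂)) := by
    linear_combination -hgr₁' - r₁ * hA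
  have hfact : ∀ r : ℝ, g r = -c * (r - r₁) * (r - r₂) * (r + r₁ + r₂) := by
    intro r
    simp only [hg]
    linear_combination (-r) * hA - hm2
  have hfg : ∀ r : ℝ, 0 < r →
      (1 - 2 * m / r - c * r ^ 2) = g r / r := by
    intro r hr
    simp only [hg]
    field_simp
  refine ⟨r₁, r₂, hr₁0, hr₁₂, ?_, ?_, ?_, ?_, ?_, ?_⟩
  · show (1 - 2 * m / r₁ - c * r₁ ^ 2) = 0
    rw [hfg r₁ hr₁0, hgr₁, zero_div]
  · show (1 - 2 * m / r₂ - c * r₂ ^ 2) = 0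
    rw [hfg r₂ hr₂0, hgr₂, zero_div]
  · intro r hr hfr
    have hfr' : (1 - 2 * m / r - c * r ^ 2) = 0 := hfr
    have hgr : g r = 0 := by
      rw [hfg r hr] at hfr'
      rcases div_eq_zero_iff.mp hfr' with h | h
      · exact h
      · exact absurd h (ne_of_gt hr)
    rw [hfact r] at hgr
    have hsum : r + r₁ + r₂ ≠ 0 := by positivity
    rcases mul_eq_zero.mp hgr with h | h
    · rcases mul_eq_zero.mp h with h' | h'
      · rcases mul_eq_zero.mp h' with h'' | h''
        · exact absurd h'' (neg_ne_zero.mpr (ne_of_gt hcpos))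
        · exact Or.inl (sub_eq_zero.mp h'')
      · exact Or.inr (sub_eq_zero.mp h')
    · exact absurd h hsum
  · rintro r ⟨h1, h2⟩
    have hr : 0 < r := lt_trans hr₁0 h1
    show 0 < (1 - 2 * m / r - c * r ^ 2)
    rw [hfg r hr]
    apply div_pos _ hr
    rw [hfact r]
    have heq : -c * (r - r₁) * (r - r₂) * (r + r₁ + r₂)
        = c * ((r - r₁) * (r₂ - r) * (r + r₁ + r₂)) := by ring
    rw [heq]
    apply mul_pos hcpos
    apply mul_pos (mul_pos (by linarith) (by linarith))
    positivity
  · rintro r ⟨h1, h2⟩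
    show (1 - 2 * m / r - c * r ^ 2) < 0
    rw [hfg r h1]
    apply div_neg_of_neg_of_pos _ h1
    rw [hfact r]
    have hpos : 0 < c * ((r₁ - r) * (r₂ - r) * (r + r₁ + r₂)) := by
      apply mul_pos hcpos
      apply mul_pos (mul_pos (by linarith) (by linarith))
      positivity
    nlinarith [hpos]
  · intro r hr
    have hrpos : 0 < r := lt_trans hr₂0 hr
    show (1 - 2 * m / r - c * r ^ 2) < 0
    rw [hfg r hrpos]
    apply div_neg_of_neg_of_pos _ hrpos
    rw [hfact r]
    have hpos : 0 < c * ((r - r₁) * (r - r₂) * (r + r₁ + r₂)) := by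
      apply mul_pos hcpos
      apply mul_pos (mul_pos (by linarith) (by linarith))
      positivity
    nlinarith [hpos]
end
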